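/- arXiv:1904.13225 — 2 statements merged into one kernel-verified Lean document; each statement's English description precedes it below -/
import Mathlib

section
/- For any simple graph G on n ≥ 2 vertices, q_2(G) + q_n(\overline{G}) ≤ n - 2, where q_2 is the second largest and q_n the smallest eigenvalue of the signless Laplacian. -/
open Matrix

/-- The signless Laplacian matrix `Q(G) = D(G) + A(G)` of a simple graph. -/
noncomputable def signlessLaplacian {V : Type*} [Fintype V] [DecidableEq V]
    (G : SimpleGraph V) : Matrix V V ℝ :=
  letI := Classical.decRel G.Adj
  Matrix.diagonal (fun v => (G.degree v : ℝ)) + G.adjMatrix ℝ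

/-- The multiset of eigenvalues (with multiplicity) of a real symmetric matrix. -/
noncomputable def eigMultiset {V : Type*} [Fintype V] [DecidableEq V]
    (A : Matrix V V ℝ) : Multiset ℝ :=
  if h : A.IsHermitian then Finset.univ.val.map h.eigenvalues else 0

/-- The `k`-th largest eigenvalue (1-indexed) of a real symmetric matrix. -/
noncomputable def kthEig {V : Type*} [Fintype V] [DecidableEq V]
    (A : Matrix V V ℝ) (k : ℕ) : ℝ :=
  ((eigMultiset A).sort (· ≥ ·)).getD (k - 1) 0

/-- Degree of a vertex, with classical decidability of adjacency. -/
noncomputable def gdeg {V : Type*} [Fintype V] (G : SimpleGraph V) (v : V) : ℕ :=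
  letI := Classical.decRel G.Adj
  G.degree v

/-- The `k`-th largest degree (1-indexed, with multiplicity) of a graph. -/
noncomputable def kthLargestDegree {V : Type*} [Fintype V] (G : SimpleGraph V) (k : ℕ) : ℕ :=
  ((Finset.univ.val.map (gdeg G)).sort (· ≥ ·)).getD (k - 1) 0

/-!
Write `Q = Q(G)` and `Q' = Q(Gᶜ)`. Since `Q + Q' = Q(Kₙ) = (n - 2) I + J`, on vectors `x ⊥ 𝟙` we
have `xᵀQ'x = (n - 2)|x|² - xᵀQx`. The plane spanned by eigenvectors of `Q` for its two largest
eigenvalues meets the hyperplane `𝟙^⊥` in some `x ≠ 0`, and there `xᵀQx ≥ q₂(G)|x|²`. Together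
with `xᵀQ'x ≥ qₙ(Gᶜ)|x|²` this gives `(q₂(G) + qₙ(Gᶜ))|x|² ≤ (n - 2)|x|²`.
-/

section Spectral

variable {V : Type*} [Fintype V] [DecidableEq V] {A : Matrix V V ℝ}

lemma sort_eigMultiset_eq_ofFn (hA : A.IsHermitian) :
    (eigMultiset A).sort (· ≥ ·) = List.ofFn hA.eigenvalues₀ := by
  rw [← hA.sort_roots_charpoly_eq_eigenvalues₀, hA.roots_charpoly_eq_eigenvalues, eigMultiset,
    dif_pos hA]
  simp

lemma kthEig_eq_eigenvalues₀ (hA : A.IsHermitian) {k : ℕ} (hk : k - 1 < Fintype.card V) :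
    kthEig A k = hA.eigenvalues₀ ⟨k - 1, hk⟩ := by
  rw [kthEig, sort_eigMultiset_eq_ofFn hA, List.getD_eq_getElem _ _ (by simpa), List.getElem_ofFn]

lemma kthEig_card_le_eigenvalues (hA : A.IsHermitian) (i : V) :
    kthEig A (Fintype.card V) ≤ hA.eigenvalues i := by
  have hpos : 0 < Fintype.card V := Fintype.card_pos_iff.mpr ⟨i⟩
  rw [kthEig_eq_eigenvalues₀ hA (by omega)]
  exact hA.eigenvalues₀_antitone (Fin.le_def.mpr (Nat.le_sub_one_of_lt (Fin.is_lt _)))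

lemma exists_ne_kthEig_two_le_eigenvalues (hA : A.IsHermitian) (h2 : 2 ≤ Fintype.card V) :
    ∃ i j, i ≠ j ∧ kthEig A 2 ≤ hA.eigenvalues i ∧ kthEig A 2 ≤ hA.eigenvalues j := by
  let e := Fintype.equivOfCardEq (Fintype.card_fin (Fintype.card V))
  have he (k) : hA.eigenvalues (e k) = hA.eigenvalues₀ k := by
    simp [Matrix.IsHermitian.eigenvalues, e]
  refine ⟨e ⟨0, by omega⟩, e ⟨1, by omega⟩, by simp [e], ?_, ?_⟩ <;>
    rw [he, kthEig_eq_eigenvalues₀ hA (by omega)]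
  exact hA.eigenvalues₀_antitone (Fin.le_def.mpr (by simp))

end Spectral

section Quadratic

variable {V : Type*} [Fintype V]

lemma dotProduct_self_pos_iff {x : V → ℝ} : 0 < x ⬝ᵥ x ↔ x ≠ 0 :=
  dotProduct_star_self_pos_iff

lemma mulVec_dotProduct_mulVec_mulVec (U M : Matrix V V ℝ) (x y : V → ℝ) :
    (U *ᵥ x) ⬝ᵥ (M *ᵥ (U *ᵥ y)) = x ⬝ᵥ ((Uᵀ * M * U) *ᵥ y) := by
  rw [dotProduct_comm, mulVec_mulVec, ← dotProduct_transpose_mulVec, mulVec_mulVec, mul_assoc]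

lemma exists_ne_zero_dotProduct_eq_zero_of_support_pair {K : Type*} [Field K] [DecidableEq V]
    {i j : V} (hij : i ≠ j) (v : V → K) :
    ∃ y ≠ 0, v ⬝ᵥ y = 0 ∧ ∀ k, y k ≠ 0 → k = i ∨ k = j := by
  by_cases hvi : v i = 0
  · refine ⟨Pi.single i 1, by simp, by simp [hvi], fun k hk => .inl ?_⟩
    by_contra hki
    simp [hki] at hk
  · refine ⟨Pi.single i (v j) - Pi.single j (v i), fun h => hvi ?_, ?_, fun k hk => ?_⟩
    · simpa [hij.symm] using congr_fun h j
    · simp [mul_comm]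
    · by_contra hk'
      push Not at hk'
      simp [hk'.1, hk'.2] at hk

namespace Matrix.IsHermitian

variable [DecidableEq V] {A : Matrix V V ℝ} (hA : A.IsHermitian)

lemma transpose_eigenvectorUnitary_mul_self :
    (hA.eigenvectorUnitary : Matrix V V ℝ)ᵀ * hA.eigenvectorUnitary = 1 := by
  rw [← conjTranspose_eq_transpose_of_trivial, ← star_eq_conjTranspose]
  exact Unitary.star_mul_self_of_mem hA.eigenvectorUnitary.2

lemma eigenvectorUnitary_mul_transpose_self :
    (hA.eigenvectorUnitary : Matrix V V ℝ) * (hA.eigenvectorUnitary : Matrix V V ℝ)ᵀ = 1 := by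
  rw [← conjTranspose_eq_transpose_of_trivial, ← star_eq_conjTranspose]
  exact Unitary.mul_star_self_of_mem hA.eigenvectorUnitary.2

lemma transpose_eigenvectorUnitary_mul_mul_eigenvectorUnitary :
    (hA.eigenvectorUnitary : Matrix V V ℝ)ᵀ * A * hA.eigenvectorUnitary =
      diagonal hA.eigenvalues := by
  have := hA.conjStarAlgAut_star_eigenvectorUnitary
  rw [Unitary.conjStarAlgAut_star_apply] at this
  simpa [← conjTranspose_eq_transpose_of_trivial, ← star_eq_conjTranspose] using this

lemma eigenvectorUnitary_mulVec_dotProduct_self (y : V → ℝ) :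
    ((hA.eigenvectorUnitary : Matrix V V ℝ) *ᵥ y) ⬝ᵥ
      ((hA.eigenvectorUnitary : Matrix V V ℝ) *ᵥ y) = y ⬝ᵥ y := by
  simpa [transpose_eigenvectorUnitary_mul_self] using
    mulVec_dotProduct_mulVec_mulVec (hA.eigenvectorUnitary : Matrix V V ℝ) 1 y y

lemma eigenvectorUnitary_mulVec_dotProduct_mulVec (y : V → ℝ) :
    ((hA.eigenvectorUnitary : Matrix V V ℝ) *ᵥ y) ⬝ᵥ
        (A *ᵥ ((hA.eigenvectorUnitary : Matrix V V ℝ) *ᵥ y)) =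
      ∑ i, hA.eigenvalues i * y i ^ 2 := by
  rw [mulVec_dotProduct_mulVec_mulVec, transpose_eigenvectorUnitary_mul_mul_eigenvectorUnitary]
  simp only [dotProduct, mulVec_diagonal]
  exact Finset.sum_congr rfl fun i _ => by ring

lemma mul_dotProduct_self_le_of_le_eigenvalues {m : ℝ} {y : V → ℝ}
    (hy : ∀ i, y i ≠ 0 → m ≤ hA.eigenvalues i) :
    m * (((hA.eigenvectorUnitary : Matrix V V ℝ) *ᵥ y) ⬝ᵥ
        ((hA.eigenvectorUnitary : Matrix V V ℝ) *ᵥ y)) ≤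
      ((hA.eigenvectorUnitary : Matrix V V ℝ) *ᵥ y) ⬝ᵥ
        (A *ᵥ ((hA.eigenvectorUnitary : Matrix V V ℝ) *ᵥ y)) := by
  rw [eigenvectorUnitary_mulVec_dotProduct_self, eigenvectorUnitary_mulVec_dotProduct_mulVec,
    dotProduct, Finset.mul_sum]
  refine Finset.sum_le_sum fun i _ => ?_
  by_cases hyi : y i = 0
  · simp [hyi]
  · nlinarith [hy i hyi, sq_nonneg (y i)]

lemma mul_dotProduct_self_le_dotProduct_mulVec {m : ℝ} (hm : ∀ i, m ≤ hA.eigenvalues i)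
    (x : V → ℝ) : m * (x ⬝ᵥ x) ≤ x ⬝ᵥ (A *ᵥ x) := by
  have hx : (hA.eigenvectorUnitary : Matrix V V ℝ) *ᵥ
      ((hA.eigenvectorUnitary : Matrix V V ℝ)ᵀ *ᵥ x) = x := by
    rw [mulVec_mulVec, eigenvectorUnitary_mul_transpose_self, one_mulVec]
  rw [← hx]
  exact hA.mul_dotProduct_self_le_of_le_eigenvalues fun i _ => hm i

lemma exists_ne_zero_dotProduct_eq_zero_of_le_eigenvalues {m : ℝ} {i j : V} (hij : i ≠ j)
    (hi : m ≤ hA.eigenvalues i) (hj : m ≤ hA.eigenvalues j) (w : V → ℝ) :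
    ∃ x ≠ 0, w ⬝ᵥ x = 0 ∧ m * (x ⬝ᵥ x) ≤ x ⬝ᵥ (A *ᵥ x) := by
  obtain ⟨y, hy0, hwy, hsupp⟩ := exists_ne_zero_dotProduct_eq_zero_of_support_pair hij
    (w ᵥ* (hA.eigenvectorUnitary : Matrix V V ℝ))
  refine ⟨(hA.eigenvectorUnitary : Matrix V V ℝ) *ᵥ y, fun h => hy0 ?_,
    by rwa [dotProduct_mulVec], ?_⟩
  · have := congr_arg ((hA.eigenvectorUnitary : Matrix V V ℝ)ᵀ *ᵥ ·) h
    rwa [mulVec_mulVec, transpose_eigenvectorUnitary_mul_self, one_mulVec, mulVec_zero] at this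
  · refine hA.mul_dotProduct_self_le_of_le_eigenvalues fun k hk => ?_
    rcases hsupp k hk with rfl | rfl <;> assumption

end Matrix.IsHermitian

end Quadratic

section SignlessLaplacian

variable {V : Type*} [Fintype V] [DecidableEq V]

lemma signlessLaplacian_eq (G : SimpleGraph V) [DecidableRel G.Adj] :
    signlessLaplacian G = diagonal (fun v => (G.degree v : ℝ)) + G.adjMatrix ℝ := by
  unfold signlessLaplacian
  congr!

lemma signlessLaplacian_isHermitian (G : SimpleGraph V) : (signlessLaplacian G).IsHermitian := by
  classical
  rw [signlessLaplacian_eq]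
  refine (isHermitian_diagonal _).add ?_
  rw [IsHermitian, conjTranspose_eq_transpose_of_trivial]
  exact G.transpose_adjMatrix

lemma signlessLaplacian_add_compl (G : SimpleGraph V) :
    signlessLaplacian G + signlessLaplacian Gᶜ = signlessLaplacian ⊤ := by
  classical
  rw [signlessLaplacian_eq, signlessLaplacian_eq, signlessLaplacian_eq]
  ext v w
  by_cases hvw : v = w
  · subst hvw
    have hlt := G.degree_lt_card_verts v
    have htop : (⊤ : SimpleGraph V).degree v = Fintype.card V - 1 :=
      SimpleGraph.complete_graph_degree v
    simp only [Matrix.add_apply, diagonal_apply_eq, SimpleGraph.adjMatrix_apply,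
      SimpleGraph.irrefl, if_false, add_zero]
    rw [← Nat.cast_add, SimpleGraph.degree_compl, htop]
    congr 1
    omega
  · by_cases h : G.Adj v w <;> simp [hvw, h]

lemma signlessLaplacian_top_mulVec (x : V → ℝ) :
    signlessLaplacian (⊤ : SimpleGraph V) *ᵥ x =
      ((Fintype.card V : ℝ) - 2) • x + (∑ i, x i) • 1 := by
  rw [signlessLaplacian_eq]
  ext v
  have hcard : 1 ≤ Fintype.card V := Fintype.card_pos_iff.mpr ⟨v⟩
  simp only [add_mulVec, Pi.add_apply, mulVec_diagonal, SimpleGraph.adjMatrix_mulVec_apply,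
    SimpleGraph.neighborFinset_top, ← SimpleGraph.completeGraph_eq_top,
    SimpleGraph.complete_graph_degree, Nat.cast_sub hcard, Fintype.sum_eq_add_sum_compl v x]
  simp
  ring

end SignlessLaplacian

lemma dotProduct_signlessLaplacian_compl_mulVec {V : Type*} [Fintype V] [DecidableEq V]
    (G : SimpleGraph V) {x : V → ℝ} (hx : ∑ i, x i = 0) :
    x ⬝ᵥ (signlessLaplacian Gᶜ *ᵥ x) =
      ((Fintype.card V : ℝ) - 2) * (x ⬝ᵥ x) - x ⬝ᵥ (signlessLaplacian G *ᵥ x) := by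
  have h := congr_arg (fun M => x ⬝ᵥ (M *ᵥ x)) (signlessLaplacian_add_compl G)
  simp only [add_mulVec, dotProduct_add, signlessLaplacian_top_mulVec, hx, zero_smul, add_zero,
    dotProduct_smul, smul_eq_mul] at h
  linarith

theorem stmt3 (n : ℕ) (hn : 2 ≤ n) (G : SimpleGraph (Fin n)) :
    kthEig (signlessLaplacian G) 2 + kthEig (signlessLaplacian Gᶜ) n ≤ (n : ℝ) - 2 := by
  have hA := signlessLaplacian_isHermitian G
  have hB := signlessLaplacian_isHermitian Gᶜ
  obtain ⟨i, j, hij, hi, hj⟩ :=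
    exists_ne_kthEig_two_le_eigenvalues hA (by rwa [Fintype.card_fin])
  obtain ⟨x, hx0, hx1, hxA⟩ :=
    hA.exists_ne_zero_dotProduct_eq_zero_of_le_eigenvalues hij hi hj 1
  have hxB := hB.mul_dotProduct_self_le_dotProduct_mulVec
    (fun k => by simpa using kthEig_card_le_eigenvalues hB k) x
  rw [dotProduct_signlessLaplacian_compl_mulVec G (by rwa [one_dotProduct] at hx1),
    Fintype.card_fin] at hxB
  refine le_of_mul_le_mul_right ?_ (dotProduct_self_pos_iff.mpr hx0)
  linarith
end

section
/- Let G be a simple graph and let S be a set of at least 2 vertices of G that is an independent set such that all vertices of S have the same neighborhood. Then all vertices of S have a common degree d, and d is an eigenvalue of the signless Laplacian Q(G) with multiplicity at least |S| - 1. -/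
open Matrix

/-! If `u` and `v` have the same neighbourhood, the columns of the adjacency matrix at `u` and `v`
coincide and `deg u = deg v =: d`, so `Q (e_u - e_v) = d (e_u - e_v)`. Fixing `u ∈ S`, the vectors
`e_u - e_v` for `v ∈ S \ {u}` are linearly independent, so the `d`-eigenspace of `Q` has dimension
at least `|S| - 1`; geometric multiplicity is bounded by algebraic multiplicity, which is the
number of times `d` occurs among the eigenvalues. -/

open Module.End

namespace Matrix

variable {n : Type*} [Fintype n] [DecidableEq n] {A : Matrix n n ℝ}

theorem IsHermitian.eigMultiset_eq_roots_charpoly (hA : A.IsHermitian) :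
    eigMultiset A = A.charpoly.roots := by
  rw [eigMultiset, dif_pos hA, hA.roots_charpoly_eq_eigenvalues]
  rfl

theorem IsHermitian.finrank_eigenspace_le_count_eigMultiset (hA : A.IsHermitian) (μ : ℝ) :
    Module.finrank ℝ (eigenspace (toLin' A) μ) ≤ (eigMultiset A).count μ := by
  rw [hA.eigMultiset_eq_roots_charpoly, Polynomial.count_roots, ← charpoly_toLin']
  exact LinearMap.finrank_eigenspace_le _ μ

theorem IsHermitian.card_le_count_eigMultiset {ι : Type*} [Fintype ι] (hA : A.IsHermitian)
    {μ : ℝ} {x : ι → n → ℝ}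
    (hx : LinearIndependent ℝ x) (hev : ∀ i, A *ᵥ x i = μ • x i) :
    Fintype.card ι ≤ (eigMultiset A).count μ := by
  have hspan : Submodule.span ℝ (Set.range x) ≤ eigenspace (toLin' A) μ :=
    Submodule.span_le.2 <| Set.range_subset_iff.2 fun i =>
      mem_eigenspace_iff.2 <| by rw [toLin'_apply, hev i]
  calc Fintype.card ι = Module.finrank ℝ (Submodule.span ℝ (Set.range x)) :=
        (finrank_span_eq_card hx).symm
    _ ≤ Module.finrank ℝ (eigenspace (toLin' A) μ) := Submodule.finrank_mono hspan
    _ ≤ (eigMultiset A).count μ := hA.finrank_eigenspace_le_count_eigMultiset μ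

end Matrix

theorem Pi.linearIndependent_single_sub_single {R n : Type*} [Ring R] [DecidableEq n] (u : n)
    (T : Finset n) (hu : u ∉ T) :
    LinearIndependent R (fun v : T => (Pi.single u 1 - Pi.single (v : n) 1 : n → R)) := by
  rw [Fintype.linearIndependent_iff]
  intro g hg i
  have hiu : (i : n) ≠ u := fun h => hu (h ▸ i.2)
  simpa [Finset.sum_apply, Pi.single_apply, hiu, Subtype.coe_inj] using congrFun hg (i : n)

namespace SimpleGraph

variable {V : Type*} [Fintype V] (G : SimpleGraph V) [DecidableRel G.Adj]

theorem gdeg_eq_degree (v : V) : gdeg G v = G.degree v := by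
  unfold gdeg
  convert rfl

theorem signlessLaplacian_eq [DecidableEq V] :
    signlessLaplacian G = diagonal (fun v => (G.degree v : ℝ)) + G.adjMatrix ℝ := by
  unfold signlessLaplacian
  convert rfl

theorem isHermitian_signlessLaplacian [DecidableEq V] : (signlessLaplacian G).IsHermitian := by
  rw [signlessLaplacian_eq]
  exact (isHermitian_diagonal _).add (G.isSymm_adjMatrix)

variable {G} {u v : V}

theorem degree_eq_of_adj_iff (h : ∀ w, G.Adj u w ↔ G.Adj v w) : G.degree u = G.degree v := by
  unfold degree
  congr 1
  ext w
  simp [h w]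

theorem adjMatrix_mulVec_single_sub_single [DecidableEq V] (h : ∀ w, G.Adj u w ↔ G.Adj v w) :
    G.adjMatrix ℝ *ᵥ (Pi.single u 1 - Pi.single v 1) = 0 := by
  ext w
  simp [G.adj_comm w, h]

theorem signlessLaplacian_mulVec_single_sub_single [DecidableEq V]
    (h : ∀ w, G.Adj u w ↔ G.Adj v w) :
    signlessLaplacian G *ᵥ (Pi.single u 1 - Pi.single v 1)
      = (G.degree u : ℝ) • (Pi.single u 1 - Pi.single v 1) := by
  rw [signlessLaplacian_eq, add_mulVec, adjMatrix_mulVec_single_sub_single h, add_zero]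
  have hdeg := degree_eq_of_adj_iff h
  ext w
  simp only [mulVec_diagonal, Pi.sub_apply, Pi.smul_apply, Pi.single_apply, smul_eq_mul]
  split_ifs <;> subst_vars <;> simp [hdeg]

end SimpleGraph

theorem stmt7_general {V : Type*} [Fintype V] [DecidableEq V] (G : SimpleGraph V)
    (S : Finset V) (hS : 2 ≤ S.card)
    (hnbr : ∀ u ∈ S, ∀ v ∈ S, ∀ w, (G.Adj u w ↔ G.Adj v w)) :
    ∃ d : ℕ, (∀ v ∈ S, gdeg G v = d) ∧
      S.card - 1 ≤ (eigMultiset (signlessLaplacian G)).count (d : ℝ) := by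
  classical
  obtain ⟨u, hu⟩ := Finset.card_pos.1 (by omega : 0 < S.card)
  refine ⟨G.degree u, fun v hv => ?_, ?_⟩
  · rw [SimpleGraph.gdeg_eq_degree, SimpleGraph.degree_eq_of_adj_iff (hnbr v hv u hu)]
  have hev : ∀ v : S.erase u, signlessLaplacian G *ᵥ (Pi.single u 1 - Pi.single (v : V) 1)
      = (G.degree u : ℝ) • (Pi.single u 1 - Pi.single (v : V) 1) := fun v =>
    SimpleGraph.signlessLaplacian_mulVec_single_sub_single (hnbr u hu v (S.mem_of_mem_erase v.2))
  calc S.card - 1 = Fintype.card (S.erase u) := by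
        rw [Fintype.card_coe, Finset.card_erase_of_mem hu]
    _ ≤ _ := (SimpleGraph.isHermitian_signlessLaplacian G).card_le_count_eigMultiset
        (Pi.linearIndependent_single_sub_single u (S.erase u) (S.notMem_erase u)) hev

theorem stmt7 {V : Type*} [Fintype V] [DecidableEq V] (G : SimpleGraph V)
    (S : Finset V) (hS : 2 ≤ S.card)
    (hindep : ∀ u ∈ S, ∀ v ∈ S, ¬ G.Adj u v)
    (hnbr : ∀ u ∈ S, ∀ v ∈ S, ∀ w, (G.Adj u w ↔ G.Adj v w)) :
    ∃ d : ℕ, (∀ v ∈ S, gdeg G v = d) ∧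
      S.card - 1 ≤ (eigMultiset (signlessLaplacian G)).count (d : ℝ) :=
  stmt7_general G S hS hnbr
end
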